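/- arXiv:2112.10304 — 3 statements merged into one kernel-verified Lean document; each statement's English description precedes it below -/
import Mathlib

section
/- For any nonempty position P, the number of distinct positions reachable from P by a single chomp move equals the volume of P, i.e., |Mov P| = |P|. -/
/-- A position: a nonincreasing list of positive naturals (trailing zeros removed). -/
def IsPos (P : List ℕ) : Prop := P.Pairwise (· ≥ ·) ∧ ∀ a ∈ P, 0 < a

/-- The result of chomping position `P`, keeping the first `x` entries and
truncating all later entries to at most `a` (then removing zeros). -/
def chompAt (P : List ℕ) (x a : ℕ) : List ℕ :=
  (P.take x ++ (P.drop x).map (fun b => min b a)).filter (fun b => 0 < b)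

/-- A chomp move from `P` to `Q`. -/
def ChompMove (P Q : List ℕ) : Prop :=
  ∃ x a : ℕ, x < P.length ∧ Q = chompAt P x a ∧ Q ≠ P

/-!
A move `chompAt P x a` is a cell `(x, a)` of the Young diagram of `P`, chomped together with
everything to its lower right. Reading lists through `getD · 0`, which makes the zero truncation
in `chompAt` invisible, the result keeps the rows before `x` and caps every later row at `a`.
Hence it differs from `P` exactly when `a < P[x]`, i.e. when `(x, a)` is a cell, and distinct
cells give distinct positions: `x` is the first row that changes and `a` its new length. So the
moves are in bijection with the cells, of which there are `P.sum`.
-/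

namespace List

theorem eq_of_forall_getD_eq {L₁ L₂ : List ℕ} (h₁ : ∀ b ∈ L₁, 0 < b)
    (h₂ : ∀ b ∈ L₂, 0 < b) (h : ∀ i, L₁.getD i 0 = L₂.getD i 0) : L₁ = L₂ := by
  induction L₁ generalizing L₂ with
  | nil =>
    cases L₂ with
    | nil => rfl
    | cons b t => exact absurd (h 0) (h₂ b (by simp)).ne
  | cons b t ih =>
    cases L₂ with
    | nil => exact absurd (h 0) (h₁ b (by simp)).ne'
    | cons c s =>
      rw [show b = c from h 0, ih (fun x hx => h₁ x (mem_cons_of_mem b hx))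
        (fun x hx => h₂ x (mem_cons_of_mem c hx)) fun i => h (i + 1)]

theorem Pairwise.antitone_getD {L : List ℕ} (hL : L.Pairwise (· ≥ ·)) :
    Antitone (L.getD · 0) := by
  intro i j hij
  by_cases hj : j < L.length
  · simp only [getD_eq_getElem _ _ hj, getD_eq_getElem _ _ (hij.trans_lt hj)]
    rcases hij.lt_or_eq with hlt | rfl
    · exact pairwise_iff_getElem.1 hL i j _ hj hlt
    · rfl
  · simp only [getD_eq_default _ _ (not_lt.1 hj)]
    exact Nat.zero_le _

theorem lt_length_of_lt_getD {L : List ℕ} {x a : ℕ} (h : a < L.getD x 0) :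
    x < L.length := by
  by_contra hx
  rw [getD_eq_default _ _ (not_lt.1 hx)] at h
  exact Nat.not_lt_zero a h

end List

theorem pos_of_mem_chompAt {P : List ℕ} {x a b : ℕ} (hb : b ∈ chompAt P x a) : 0 < b := by
  simpa using List.of_mem_filter hb

theorem getD_chompAt {P : List ℕ} (hP : ∀ b ∈ P, 0 < b) (x a i : ℕ) :
    (chompAt P x a).getD i 0 = if i < x then P.getD i 0 else min (P.getD i 0) a := by
  rcases Nat.eq_zero_or_pos a with rfl | ha
  · have hchomp : chompAt P x 0 = P.take x := by
      simpa [chompAt, List.filter_append] using fun b hb => hP b (List.mem_of_mem_take hb)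
    simp only [hchomp, List.getD_eq_getElem?_getD, List.getElem?_take]
    split_ifs <;> simp
  · have hchomp : chompAt P x a = P.take x ++ (P.drop x).map (fun b => min b a) := by
      refine List.filter_eq_self.2 fun b hb => decide_eq_true ?_
      rcases List.mem_append.1 hb with hb | hb
      · exact hP b (List.mem_of_mem_take hb)
      · obtain ⟨c, hc, rfl⟩ := List.mem_map.1 hb
        exact lt_min (hP c (List.mem_of_mem_drop hc)) ha
    simp only [hchomp, List.getD_eq_getElem?_getD, List.getElem?_append, List.getElem?_take,
      List.getElem?_map, List.getElem?_drop, List.length_take]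
    split_ifs with h₁ h₂ h₂
    · rfl
    · omega
    · rw [List.getElem?_eq_none (by omega), List.getElem?_eq_none (by omega)]; rfl
    · rcases lt_or_ge i P.length with hi | hi
      · rw [show x + (i - min x P.length) = i by omega]
        cases P[i]? <;> rfl
      · rw [List.getElem?_eq_none (by omega), List.getElem?_eq_none hi]
        simp

theorem chompAt_eq_self_iff {P : List ℕ} (hP : IsPos P) {x a : ℕ} :
    chompAt P x a = P ↔ P.getD x 0 ≤ a := by
  constructor
  · intro h
    have hx := congrArg (List.getD · x 0) h
    simp only [getD_chompAt hP.2, if_neg (lt_irrefl x)] at hx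
    exact min_eq_left_iff.1 hx
  · intro h
    refine List.eq_of_forall_getD_eq (fun _ => pos_of_mem_chompAt) hP.2 fun i => ?_
    rw [getD_chompAt hP.2]
    split_ifs with hi
    · rfl
    · exact min_eq_left ((hP.1.antitone_getD (not_lt.1 hi)).trans h)

def diagramCells (P : List ℕ) : Finset (Σ _ : ℕ, ℕ) :=
  (Finset.range P.length).sigma fun x => Finset.range (P.getD x 0)

theorem mem_diagramCells {P : List ℕ} {q : Σ _ : ℕ, ℕ} :
    q ∈ diagramCells P ↔ q.2 < P.getD q.1 0 := by
  simp only [diagramCells, Finset.mem_sigma, Finset.mem_range, and_iff_right_iff_imp]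
  exact List.lt_length_of_lt_getD

theorem card_diagramCells (P : List ℕ) : (diagramCells P).card = P.sum := by
  rw [diagramCells, Finset.card_sigma, Finset.sum_range, ← Fin.sum_univ_getElem]
  exact Finset.sum_congr rfl fun i _ => (Finset.card_range _).trans (List.getD_eq_getElem _ _ i.2)

theorem chompAt_injOn_diagramCells {P : List ℕ} (hP : ∀ b ∈ P, 0 < b) :
    Set.InjOn (fun q : Σ _ : ℕ, ℕ => chompAt P q.1 q.2) (diagramCells P) := by
  rintro ⟨x, a⟩ ha ⟨y, b⟩ hb h
  replace ha : a < P.getD x 0 := mem_diagramCells.1 ha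
  replace hb : b < P.getD y 0 := mem_diagramCells.1 hb
  have key (i : ℕ) : (if i < x then P.getD i 0 else min (P.getD i 0) a) =
      (if i < y then P.getD i 0 else min (P.getD i 0) b) := by
    rw [← getD_chompAt hP, ← getD_chompAt hP]
    exact congrArg (List.getD · i 0) h
  obtain rfl : x = y := by
    by_contra hne
    rcases lt_or_gt_of_ne hne with hlt | hlt
    · have hx := key x
      rw [if_neg (lt_irrefl x), if_pos hlt, min_eq_right ha.le] at hx
      exact ha.ne hx
    · have hy := key y
      rw [if_neg (lt_irrefl y), if_pos hlt, min_eq_right hb.le] at hy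
      exact hb.ne hy.symm
  have hx := key x
  rw [if_neg (lt_irrefl x), if_neg (lt_irrefl x), min_eq_right ha.le, min_eq_right hb.le] at hx
  rw [hx]

theorem setOf_chompMove_eq {P : List ℕ} (hP : IsPos P) :
    {Q | ChompMove P Q} = (diagramCells P).image (fun q => chompAt P q.1 q.2) := by
  ext Q
  simp only [ChompMove, Set.mem_ofPred_eq, Finset.coe_image, Set.mem_image, Finset.mem_coe,
    mem_diagramCells, Sigma.exists]
  constructor
  · rintro ⟨x, a, -, rfl, hne⟩
    exact ⟨x, a, not_le.1 (mt (chompAt_eq_self_iff hP).2 hne), rfl⟩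
  · rintro ⟨x, a, ha, rfl⟩
    exact ⟨x, a, List.lt_length_of_lt_getD ha, rfl,
      fun h => ha.not_ge ((chompAt_eq_self_iff hP).1 h)⟩

theorem ncard_mov_eq_volume_general (P : List ℕ) (hP : IsPos P) :
    Set.ncard {Q | ChompMove P Q} = P.sum := by
  rw [setOf_chompMove_eq hP, Set.ncard_coe_finset,
    Finset.card_image_of_injOn (chompAt_injOn_diagramCells hP.2), card_diagramCells]

/-- the number of positions reachable from a nonempty position `P`
in one chomp move equals the volume of `P`. -/
theorem ncard_mov_eq_volume (P : List ℕ) (hP : IsPos P) (hne : P ≠ []) :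
    Set.ncard {Q | ChompMove P Q} = P.sum :=
  ncard_mov_eq_volume_general P hP
end

section
/- Given an n-player rule f = (α_1,...,α_n) of distinct reals, for every nonempty position P the score obtained by the first player under optimal play is uniquely determined (Zermelo's theorem for multiplayer chomp); equivalently, the ordinal ord_f P is well-defined by the recursion ord_f (1) = 1 and α_{ord_f P} = max over Q ∈ Mov P with ord_f Q ≠ n of α_{ord_f Q + 1}, where indices are taken with α_{n+1} := α_1. -/
/-- `ord` is an ordinal assignment for the `n`-player rule `α` (with scores
`α 1, ..., α n`): `ord [] = 0`, ordinals of nonempty positions lie in `[1, n]`,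
and `α (ord P)` is the maximum of `α (ord Q + 1)` over moves `P → Q` with `ord Q ≠ n`. -/
structure IsOrd (n : ℕ) (α : ℕ → ℝ) (ord : List ℕ → ℕ) : Prop where
  ord_empty : ord [] = 0
  ord_mem : ∀ P, IsPos P → P ≠ [] → 1 ≤ ord P ∧ ord P ≤ n
  exists_best : ∀ P, IsPos P → P ≠ [] →
    ∃ Q, ChompMove P Q ∧ ord Q ≠ n ∧ ord P = ord Q + 1
  le_best : ∀ P, IsPos P → P ≠ [] → ∀ Q, ChompMove P Q → ord Q ≠ n →
    α (ord Q + 1) ≤ α (ord P)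

/-!
Every chomp move strictly decreases the number of squares, so ordinals can be defined by
well-founded recursion on it: among the moves `P → Q` with `ord Q ≠ n`, the mover picks the
one maximising `α (ord Q + 1)`. The empty position is always such a move (its ordinal is `0`),
so the maximum is over a nonempty finite set. Uniqueness follows by the same induction: two
ordinal assignments that agree on all moves from `P` give the same maximal score at `P`, and
the scores `α 1, …, α n` are distinct.
-/

open Finset

section ChompMoves

variable {P Q : List ℕ} {x a : ℕ}

lemma isPos_chompAt (hP : IsPos P) (x a : ℕ) : IsPos (chompAt P x a) := by
  refine ⟨List.Pairwise.sublist List.filter_sublist ?_, fun b hb => by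
    simpa using (List.mem_filter.1 hb).2⟩
  have hsplit : (P.take x ++ P.drop x).Pairwise (· ≥ ·) := by
    rw [List.take_append_drop]; exact hP.1
  rw [List.pairwise_append] at hsplit ⊢
  refine ⟨hsplit.1, hsplit.2.1.map _ fun u v huv => min_le_min huv le_rfl, ?_⟩
  intro u hu v hv
  obtain ⟨b, hb, rfl⟩ := List.mem_map.1 hv
  exact (min_le_left b a).trans (hsplit.2.2 u hu b hb)

lemma IsPos.sum_chompAt_lt (hP : IsPos P) (hne : chompAt P x a ≠ P) :
    (chompAt P x a).sum < P.sum := by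
  obtain ⟨b, hb, hlt⟩ : ∃ b ∈ P.drop x, min b a < b := by
    by_contra! hall
    apply hne
    have hid : (P.drop x).map (fun b => min b a) = P.drop x := by
      rw [List.map_congr_left fun b hb => le_antisymm (min_le_left b a) (hall b hb),
        List.map_id']
    rw [chompAt, hid, List.take_append_drop, List.filter_eq_self]
    simpa using hP.2
  calc (chompAt P x a).sum
      ≤ (P.take x ++ (P.drop x).map fun b => min b a).sum :=
        List.filter_sublist.sum_le_sum fun _ _ => Nat.zero_le _
    _ < (P.take x ++ (P.drop x).map id).sum := by
        simp only [List.sum_append]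
        exact Nat.add_lt_add_left
          (List.sum_lt_sum _ _ (fun b _ => min_le_left b a) ⟨b, hb, hlt⟩) _
    _ = P.sum := by rw [List.map_id, List.take_append_drop]

lemma isPos_of_chompMove (hP : IsPos P) (h : ChompMove P Q) : IsPos Q := by
  obtain ⟨x, a, -, rfl, -⟩ := h
  exact isPos_chompAt hP x a

lemma IsPos.sum_lt_of_chompMove (hP : IsPos P) (h : ChompMove P Q) : Q.sum < P.sum := by
  obtain ⟨x, a, -, rfl, hne⟩ := h
  exact hP.sum_chompAt_lt hne

lemma chompMove_nil (hne : P ≠ []) : ChompMove P [] :=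
  ⟨0, 0, List.length_pos_of_ne_nil hne, by simp [chompAt], hne.symm⟩

lemma chompAt_min_sum (P : List ℕ) (x a : ℕ) : chompAt P x (min a P.sum) = chompAt P x a := by
  have hmap : (P.drop x).map (fun b => min b (min a P.sum)) = (P.drop x).map fun b => min b a :=
    List.map_congr_left fun b hb => by
      have : b ≤ P.sum := List.le_sum_of_mem (List.mem_of_mem_drop hb)
      omega
  rw [chompAt, chompAt, hmap]

theorem chomp_induction {motive : List ℕ → Prop}
    (step : ∀ P, IsPos P → (∀ Q, ChompMove P Q → motive Q) → motive P)
    (P : List ℕ) (hP : IsPos P) : motive P :=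
  step P hP fun Q hQ => chomp_induction step Q (isPos_of_chompMove hP hQ)
termination_by P.sum
decreasing_by exact hP.sum_lt_of_chompMove hQ

/-- The moves from `P`, as a finset; the filter on the sum makes it usable for recursion on
positions that are not known to satisfy `IsPos`. -/
def chompMoves (P : List ℕ) : Finset (List ℕ) :=
  ((range P.length ×ˢ range (P.sum + 1)).image fun p => chompAt P p.1 p.2).filter
    (·.sum < P.sum)

lemma sum_lt_of_mem_chompMoves (h : Q ∈ chompMoves P) : Q.sum < P.sum :=
  (mem_filter.1 h).2

lemma chompMoves_nil : chompMoves [] = ∅ := by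
  simp [chompMoves]

lemma IsPos.mem_chompMoves (hP : IsPos P) : Q ∈ chompMoves P ↔ ChompMove P Q := by
  simp only [chompMoves, mem_filter, mem_image, mem_product, mem_range, Prod.exists]
  constructor
  · rintro ⟨⟨x, a, ⟨hx, -⟩, rfl⟩, hlt⟩
    exact ⟨x, a, hx, rfl, fun h => (h ▸ hlt).false⟩
  · rintro ⟨x, a, hx, rfl, hne⟩
    exact ⟨⟨x, min a P.sum, ⟨hx, by omega⟩, chompAt_min_sum P x a⟩, hP.sum_chompAt_lt hne⟩

end ChompMoves

section Argmax

variable {ι β : Type*} [Inhabited ι] [LinearOrder β]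

noncomputable def argmaxOn (f : ι → β) (s : Finset ι) : ι :=
  if h : s.Nonempty then (s.exists_max_image f h).choose else default

lemma argmaxOn_empty (f : ι → β) : argmaxOn f ∅ = default := by
  simp [argmaxOn]

lemma argmaxOn_mem (f : ι → β) {s : Finset ι} (h : s.Nonempty) : argmaxOn f s ∈ s := by
  rw [argmaxOn, dif_pos h]
  exact (s.exists_max_image f h).choose_spec.1

lemma le_argmaxOn (f : ι → β) {s : Finset ι} {i : ι} (hi : i ∈ s) : f i ≤ f (argmaxOn f s) := by
  have h : s.Nonempty := ⟨i, hi⟩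
  rw [argmaxOn, dif_pos h]
  exact (s.exists_max_image f h).choose_spec.2 i hi

end Argmax

section Existence

variable {n : ℕ} {α : ℕ → ℝ} {ord : List ℕ → ℕ} {P : List ℕ} {m : ℕ}

def ordCandidates (n : ℕ) (ord : List ℕ → ℕ) (P : List ℕ) : Finset ℕ :=
  ((chompMoves P).filter (ord · ≠ n)).image (ord · + 1)

lemma IsPos.mem_ordCandidates (hP : IsPos P) :
    m ∈ ordCandidates n ord P ↔ ∃ Q, ChompMove P Q ∧ ord Q ≠ n ∧ m = ord Q + 1 := by
  simp only [ordCandidates, mem_image, mem_filter, hP.mem_chompMoves, and_assoc, eq_comm]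

noncomputable def chompOrd (n : ℕ) (α : ℕ → ℝ) (P : List ℕ) : ℕ :=
  argmaxOn α (((chompMoves P).attach.filter fun Q => chompOrd n α Q.1 ≠ n).image
    fun Q => chompOrd n α Q.1 + 1)
termination_by P.sum
decreasing_by all_goals exact sum_lt_of_mem_chompMoves (Subtype.prop _)

lemma chompOrd_eq (n : ℕ) (α : ℕ → ℝ) (P : List ℕ) :
    chompOrd n α P = argmaxOn α (ordCandidates n (chompOrd n α) P) := by
  rw [chompOrd]
  congr 1
  ext m
  simp only [ordCandidates, mem_image, mem_filter, mem_attach, true_and, Subtype.exists]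
  exact exists_congr fun _ => by tauto

lemma chompOrd_nil (n : ℕ) (α : ℕ → ℝ) : chompOrd n α [] = 0 := by
  rw [chompOrd_eq, ordCandidates, chompMoves_nil]
  exact argmaxOn_empty α

lemma chompOrd_mem_ordCandidates (α : ℕ → ℝ) (hn : n ≠ 0) (hP : IsPos P) (hne : P ≠ []) :
    chompOrd n α P ∈ ordCandidates n (chompOrd n α) P := by
  rw [chompOrd_eq]
  exact argmaxOn_mem α ⟨1, hP.mem_ordCandidates.2
    ⟨[], chompMove_nil hne, (chompOrd_nil n α).trans_ne hn.symm, by rw [chompOrd_nil]⟩⟩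

lemma le_chompOrd {Q : List ℕ} (hP : IsPos P) (hQ : ChompMove P Q) (hQn : chompOrd n α Q ≠ n) :
    α (chompOrd n α Q + 1) ≤ α (chompOrd n α P) := by
  rw [chompOrd_eq n α P]
  exact le_argmaxOn α (hP.mem_ordCandidates.2 ⟨Q, hQ, hQn, rfl⟩)

lemma chompOrd_le (hn : n ≠ 0) (hP : IsPos P) : chompOrd n α P ≤ n := by
  refine chomp_induction (motive := fun P => chompOrd n α P ≤ n) (fun P hP ih => ?_) P hP
  rcases eq_or_ne P [] with rfl | hne
  · simp [chompOrd_nil]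
  obtain ⟨Q, hQ, hQn, hPQ⟩ := hP.mem_ordCandidates.1 (chompOrd_mem_ordCandidates α hn hP hne)
  have := ih Q hQ
  omega

theorem isOrd_chompOrd (hn : n ≠ 0) (α : ℕ → ℝ) : IsOrd n α (chompOrd n α) where
  ord_empty := chompOrd_nil n α
  ord_mem P hP hne := by
    obtain ⟨Q, -, -, hPQ⟩ := hP.mem_ordCandidates.1 (chompOrd_mem_ordCandidates α hn hP hne)
    exact ⟨by omega, chompOrd_le hn hP⟩
  exists_best P hP hne := hP.mem_ordCandidates.1 (chompOrd_mem_ordCandidates α hn hP hne)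
  le_best P hP _ _ hQ hQn := le_chompOrd hP hQ hQn

end Existence

namespace IsOrd

variable {n : ℕ} {α : ℕ → ℝ} {o₁ o₂ : List ℕ → ℕ} {P : List ℕ}

lemma apply_le_of_forall_chompMove (h₁ : IsOrd n α o₁) (h₂ : IsOrd n α o₂) (hP : IsPos P)
    (hne : P ≠ []) (heq : ∀ Q, ChompMove P Q → o₁ Q = o₂ Q) : α (o₁ P) ≤ α (o₂ P) := by
  obtain ⟨Q, hQ, hQn, hPQ⟩ := h₁.exists_best P hP hne
  rw [hPQ, heq Q hQ]
  exact h₂.le_best P hP hne Q hQ (heq Q hQ ▸ hQn)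

lemma apply_eq_of_forall_chompMove (hα : Set.InjOn α (Set.Icc 1 n)) (h₁ : IsOrd n α o₁)
    (h₂ : IsOrd n α o₂) (hP : IsPos P) (heq : ∀ Q, ChompMove P Q → o₁ Q = o₂ Q) :
    o₁ P = o₂ P := by
  rcases eq_or_ne P [] with rfl | hne
  · rw [h₁.ord_empty, h₂.ord_empty]
  exact hα (h₁.ord_mem P hP hne) (h₂.ord_mem P hP hne)
    ((h₁.apply_le_of_forall_chompMove h₂ hP hne heq).antisymm
      (h₂.apply_le_of_forall_chompMove h₁ hP hne fun Q hQ => (heq Q hQ).symm))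

theorem eqOn (hα : Set.InjOn α (Set.Icc 1 n)) (h₁ : IsOrd n α o₁) (h₂ : IsOrd n α o₂) :
    Set.EqOn o₁ o₂ {P | IsPos P} := fun P hP =>
  chomp_induction (fun _ hP ih => h₁.apply_eq_of_forall_chompMove hα h₂ hP ih) P hP

end IsOrd

/-- Zermelo's theorem for multiplayer chomp: for an `n`-player
rule of distinct scores, an ordinal assignment exists and is unique on positions. -/
theorem zermelo_multiplayer (n : ℕ) (hn : 2 ≤ n) (α : ℕ → ℝ)
    (hα : Set.InjOn α (Set.Icc 1 n)) :
    ∃ ord : List ℕ → ℕ, IsOrd n α ord ∧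
      ∀ ord' : List ℕ → ℕ, IsOrd n α ord' → ∀ P, IsPos P → ord' P = ord P := by
  have hord := isOrd_chompOrd (by omega : n ≠ 0) α
  exact ⟨chompOrd n α, hord, fun _ hord' _ hP => hord'.eqOn hα hord hP⟩
end

section
/- For an n-player rule f = (α_1,...,α_n), define m_f = min{i ≥ 1 : α_{i+1} < α_i} (with α_{n+1} := α_1). Then for the single-row positions: ord_f((i)) = i if i ≤ m_f, and ord_f((i)) = m_f if i > m_f. Consequently, for two rules f and g, ord_f P = ord_g P for all P ∈ D_1 if and only if m_f = m_g. -/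
/-- The rule `α` with the wraparound convention `α (n+1) := α 1`. -/
def wrapRule (n : ℕ) (α : ℕ → ℝ) : ℕ → ℝ := fun i => if i = n + 1 then α 1 else α i

/-- `m_f = min {i ≥ 1 : α (i+1) < α i}`, with `α (n+1) := α 1`. -/
noncomputable def mIndex (n : ℕ) (α : ℕ → ℝ) : ℕ :=
  sInf {i | 1 ≤ i ∧ wrapRule n α (i + 1) < wrapRule n α i}

/-!
The scores `α 1 < α 2 < ⋯ < α m_f` increase up to `m_f`, and `α (m_f + 1) < α m_f` when
`m_f < n`. On a single row (or column) of length `i` the moves reach exactly the shorter ones,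
so by induction the options have ordinals `min k m_f` for `k < i`. The best option is then the
one of ordinal `min i m_f - 1`: a smaller ordinal scores less because `α` increases below
`m_f`, and the only larger one, `m_f` itself, is either forbidden (`m_f = n`) or scores
`α (m_f + 1) < α m_f`. Rows already detect `m_f`, since `min i m_f = min i m_g` for all `i`
forces `m_f = m_g`; conversely `D₁` consists of rows and columns only.
-/

open Set

lemma wrapRule_of_le {n i : ℕ} (α : ℕ → ℝ) (hi : i ≤ n) : wrapRule n α i = α i :=
  if_neg (by omega)

section mIndex

variable {n : ℕ} {α : ℕ → ℝ}

lemma exists_wrapRule_descent (hn : 2 ≤ n) (hα : InjOn α (Icc 1 n)) :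
    ∃ i ≤ n, 1 ≤ i ∧ wrapRule n α (i + 1) < wrapRule n α i := by
  by_contra! h
  have hmono : MonotoneOn (wrapRule n α) (Icc 1 (n + 1)) :=
    monotoneOn_of_le_add_one ordConnected_Icc fun i _ hi hi' =>
      h i (by simp only [mem_Icc] at hi'; omega) hi.1
  have h1n : α 1 ≤ α n := by
    simpa only [wrapRule_of_le α (by omega : 1 ≤ n), wrapRule_of_le α le_rfl] using
      hmono ⟨le_rfl, by omega⟩ ⟨by omega, by omega⟩ (by omega : 1 ≤ n)
  have hn1 : α n ≤ α 1 := by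
    simpa [wrapRule_of_le α le_rfl, wrapRule] using
      hmono ⟨by omega, by omega⟩ ⟨by omega, le_rfl⟩ (Nat.le_succ n)
  have := hα ⟨le_rfl, by omega⟩ ⟨by omega, le_rfl⟩ (le_antisymm h1n hn1)
  omega

variable (hn : 2 ≤ n) (hα : InjOn α (Icc 1 n))
include hn hα

lemma mIndex_mem :
    mIndex n α ∈ {i | 1 ≤ i ∧ wrapRule n α (i + 1) < wrapRule n α i} ∧ mIndex n α ≤ n := by
  obtain ⟨i, hin, hi⟩ := exists_wrapRule_descent hn hα
  exact ⟨Nat.sInf_mem ⟨i, hi⟩, (Nat.sInf_le hi).trans hin⟩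

lemma one_le_mIndex : 1 ≤ mIndex n α := (mIndex_mem hn hα).1.1

lemma mIndex_le : mIndex n α ≤ n := (mIndex_mem hn hα).2

lemma apply_mIndex_add_one_lt (h : mIndex n α < n) : α (mIndex n α + 1) < α (mIndex n α) := by
  simpa only [wrapRule_of_le α h, wrapRule_of_le α (mIndex_le hn hα)] using (mIndex_mem hn hα).1.2

lemma strictMonoOn_mIndex : StrictMonoOn α (Icc 1 (mIndex n α)) := by
  refine strictMonoOn_of_lt_add_one ordConnected_Icc fun i _ hi hi' => ?_
  have hM := mIndex_le hn hα
  simp only [mem_Icc] at hi hi'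
  have hle : wrapRule n α i ≤ wrapRule n α (i + 1) :=
    not_lt.1 fun hlt => Nat.notMem_of_lt_sInf (by omega : i < mIndex n α) ⟨hi.1, hlt⟩
  rw [wrapRule_of_le α (by omega), wrapRule_of_le α (by omega)] at hle
  exact hle.lt_of_ne fun heq => by
    have := hα ⟨hi.1, by omega⟩ ⟨by omega, by omega⟩ heq
    omega

end mIndex

theorem IsOrd.apply_eq_min_mIndex_of_chain {n : ℕ} {α : ℕ → ℝ} {ord : List ℕ → ℕ}
    (h : IsOrd n α ord) (hn : 2 ≤ n) (hα : InjOn α (Icc 1 n))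
    (r : ℕ → List ℕ) (hr0 : r 0 = []) (hpos : ∀ i, IsPos (r i)) (hne : ∀ i, i ≠ 0 → r i ≠ [])
    (hmov : ∀ i, i ≠ 0 → ∀ Q, ChompMove (r i) Q ↔ ∃ k < i, Q = r k) (i : ℕ) :
    ord (r i) = min i (mIndex n α) := by
  have hM1 := one_le_mIndex hn hα
  have hMn := mIndex_le hn hα
  set M := mIndex n α
  induction i using Nat.strong_induction_on with
  | _ i IH =>
  rcases Nat.eq_zero_or_pos i with rfl | hi
  · simp [hr0, h.ord_empty]
  have hlow : α (min i M) ≤ α (ord (r i)) := by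
    have hto : ord (r (min i M - 1)) = min i M - 1 := by rw [IH _ (by omega)]; omega
    have := h.le_best _ (hpos i) (hne i hi.ne') (r (min i M - 1))
      ((hmov i hi.ne' _).2 ⟨_, by omega, rfl⟩) (by omega)
    rwa [hto, Nat.sub_add_cancel (by omega)] at this
  obtain ⟨Q, hQ, hQn, hord⟩ := h.exists_best _ (hpos i) (hne i hi.ne')
  obtain ⟨k, hk, rfl⟩ := (hmov i hi.ne' Q).1 hQ
  rw [IH k hk] at hQn hord
  rw [hord] at hlow ⊢
  rcases lt_trichotomy (min k M + 1) (min i M) with hlt | heq | hgt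
  · exact absurd hlow (not_le.2 (strictMonoOn_mIndex hn hα
      ⟨by omega, by omega⟩ ⟨by omega, by omega⟩ hlt))
  · exact heq
  · -- the option of ordinal `M` is only allowed when `M < n`, and then it scores less
    have hkM : min k M = M := by omega
    have hiM : min i M = M := by omega
    rw [hkM, hiM] at hlow
    exact absurd hlow (not_le.2 (apply_mIndex_add_one_lt hn hα (by omega)))

def singleRow (k : ℕ) : List ℕ := if k = 0 then [] else [k]

lemma singleRow_of_ne_zero {k : ℕ} (hk : k ≠ 0) : singleRow k = [k] := if_neg hk

lemma singleRow_ne_nil {k : ℕ} (hk : k ≠ 0) : singleRow k ≠ [] := by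
  simp [singleRow_of_ne_zero hk]

lemma isPos_singleRow (k : ℕ) : IsPos (singleRow k) := by
  unfold singleRow IsPos
  split_ifs <;> simp; omega

lemma chompAt_singleton (i a : ℕ) : chompAt [i] 0 a = singleRow (min i a) := by
  unfold chompAt singleRow
  split_ifs <;> simp_all [Nat.pos_iff_ne_zero]

lemma chompMove_singleRow_iff {i : ℕ} (hi : i ≠ 0) (Q : List ℕ) :
    ChompMove (singleRow i) Q ↔ ∃ k < i, Q = singleRow k := by
  rw [singleRow_of_ne_zero hi]
  constructor
  · rintro ⟨x, a, hx, rfl, hne⟩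
    obtain rfl : x = 0 := by simpa using hx
    rw [chompAt_singleton] at hne ⊢
    refine ⟨min i a, lt_of_le_of_ne (min_le_left i a) fun h => hne ?_, rfl⟩
    rw [h, singleRow_of_ne_zero hi]
  · rintro ⟨k, hk, rfl⟩
    refine ⟨0, k, by simp, by rw [chompAt_singleton, min_eq_right hk.le], fun h => ?_⟩
    unfold singleRow at h
    split_ifs at h
    exact hk.ne (List.singleton_inj.1 h)

lemma isPos_replicate_one (L : ℕ) : IsPos (List.replicate L 1) :=
  ⟨List.pairwise_replicate.2 (Or.inr le_rfl), by simp⟩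

lemma chompAt_replicate_one {L x : ℕ} (a : ℕ) (hx : x ≤ L) :
    chompAt (List.replicate L 1) x a =
      if a = 0 then List.replicate x 1 else List.replicate L 1 := by
  rw [chompAt, List.take_replicate, List.drop_replicate, List.map_replicate, min_eq_left hx]
  split_ifs with ha
  · simp [ha]
  · rw [show min 1 a = 1 by omega, ← List.replicate_add, Nat.add_sub_cancel' hx]
    simp

lemma chompMove_replicate_one_iff (L : ℕ) (Q : List ℕ) :
    ChompMove (List.replicate L 1) Q ↔ ∃ k < L, Q = List.replicate k 1 := by
  constructor
  · rintro ⟨x, a, hx, rfl, hne⟩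
    rw [List.length_replicate] at hx
    rw [chompAt_replicate_one a hx.le] at hne ⊢
    split_ifs at hne ⊢
    exacts [⟨x, hx, rfl⟩, absurd rfl hne]
  · rintro ⟨k, hk, rfl⟩
    refine ⟨k, 0, by simpa using hk, by simp [chompAt_replicate_one 0 hk.le], fun h => ?_⟩
    simpa [hk.ne] using congrArg List.length h

lemma IsPos.eq_replicate_one_of_headI_eq_one {P : List ℕ} (hP : IsPos P) (h : P.headI = 1) :
    P = List.replicate P.length 1 := by
  rcases P with _ | ⟨b, t⟩
  · rfl
  obtain rfl : b = 1 := h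
  refine List.eq_replicate_iff.2 ⟨rfl, fun c hc => ?_⟩
  have hc0 := hP.2 c hc
  rcases List.mem_cons.1 hc with rfl | hct
  · rfl
  · have := (List.pairwise_cons.1 hP.1).1 c hct
    omega

section ord

variable {n : ℕ} {α : ℕ → ℝ} {ord : List ℕ → ℕ}

theorem IsOrd.apply_singleton (h : IsOrd n α ord) (hn : 2 ≤ n) (hα : InjOn α (Icc 1 n))
    {i : ℕ} (hi : i ≠ 0) : ord [i] = min i (mIndex n α) := by
  rw [← singleRow_of_ne_zero hi]
  exact h.apply_eq_min_mIndex_of_chain hn hα singleRow rfl isPos_singleRow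
    (fun _ => singleRow_ne_nil) (fun _ => chompMove_singleRow_iff) i

theorem IsOrd.apply_replicate_one (h : IsOrd n α ord) (hn : 2 ≤ n) (hα : InjOn α (Icc 1 n))
    (L : ℕ) : ord (List.replicate L 1) = min L (mIndex n α) :=
  h.apply_eq_min_mIndex_of_chain hn hα (List.replicate · 1) rfl isPos_replicate_one
    (fun _ hL => by simpa using hL) (fun L _ => chompMove_replicate_one_iff L) L

end ord

/-- single-row ordinals are `ord (i) = min i m_f`, and two rules
agree on all of `D₁` (single rows and single columns) iff `m_f = m_g`. -/
theorem ord_singleRow_and_d1_iso (n m : ℕ) (hn : 2 ≤ n) (hm : 2 ≤ m)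
    (α β : ℕ → ℝ) (hα : Set.InjOn α (Set.Icc 1 n)) (hβ : Set.InjOn β (Set.Icc 1 m))
    (ordf ordg : List ℕ → ℕ) (hf : IsOrd n α ordf) (hg : IsOrd m β ordg) :
    (∀ i : ℕ, 1 ≤ i →
        (i ≤ mIndex n α → ordf [i] = i) ∧ (mIndex n α < i → ordf [i] = mIndex n α)) ∧
    ((∀ P, IsPos P → P ≠ [] → min P.headI P.length = 1 → ordf P = ordg P) ↔
      mIndex n α = mIndex m β) := by
  have hrowf i (hi : 1 ≤ i) := hf.apply_singleton hn hα (i := i) (by omega)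
  have hrowg i (hi : 1 ≤ i) := hg.apply_singleton hm hβ (i := i) (by omega)
  refine ⟨fun i hi => ⟨fun h => by rw [hrowf i hi]; omega, fun h => by rw [hrowf i hi]; omega⟩,
    fun hagree => ?_, fun heq P hP _ hP1 => ?_⟩
  · have hmin i (hi : 1 ≤ i) : min i (mIndex n α) = min i (mIndex m β) := by
      rw [← hrowf i hi, ← hrowg i hi]
      exact hagree [i] (singleRow_of_ne_zero (k := i) (by omega) ▸ isPos_singleRow i) (by simp)
        (by simp; omega)
    have h1 := hmin _ (one_le_mIndex hn hα)
    have h2 := hmin _ (one_le_mIndex hm hβ)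
    omega
  · rcases (by omega : P.headI = 1 ∨ P.length = 1) with hhead | hlen
    · rw [hP.eq_replicate_one_of_headI_eq_one hhead, hf.apply_replicate_one hn hα,
        hg.apply_replicate_one hm hβ, heq]
    · obtain ⟨a, rfl⟩ := List.length_eq_one_iff.1 hlen
      have ha : 1 ≤ a := hP.2 a (by simp)
      rw [hrowf a ha, hrowg a ha, heq]
end
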